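/- Let K be a totally complex number field of degree 2k with diagonal group \mathcal{A}_k = {diag(a_1,…,a_k) : |Πa_i|=1}. Then rh_{\mathcal{A}_k}(ψ(\mathcal{O}_K)) = 2k/|d_K|^{1/2k}. -/

import Mathlib

open NumberField MeasureTheory Matrix
open scoped Classical

/-- Squared Euclidean (Hermitian) norm of a complex vector. -/
noncomputable def vnormSq {ι : Type*} [Fintype ι] (v : ι → ℂ) : ℝ := ∑ i, ‖v i‖ ^ 2

/-- The relative canonical embedding of a totally complex number field into ℂ^k: one embedding
chosen from each complex-conjugate pair (i.e. one for each complex infinite place). -/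
noncomputable def relCanEmb (K : Type*) [Field K] [NumberField K] (x : K) :
    {w : InfinitePlace K // w.IsComplex} → ℂ :=
  fun w => w.1.embedding x

/-! If `‖∏ aᵢ‖ = 1` and `x ≠ 0`, the numbers `‖aᵢ ψᵢ(x)‖²` have product `|N(x)| ≥ 1`, so by
AM–GM their sum is at least `k`; `a = 1`, `x = 1` attains it. As `K` has no real places, the mixed
space is `ℂ^k` and `ψ(𝓞 K)` is its integer lattice, of covolume `2⁻ᵏ √|d_K|`. -/

open Finset

theorem card_le_sum_of_one_le_prod {ι : Type*} [Fintype ι] {p : ι → ℝ} (hp : ∀ i, 0 ≤ p i)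
    (h : 1 ≤ ∏ i, p i) : (Fintype.card ι : ℝ) ≤ ∑ i, p i := by
  rcases isEmpty_or_nonempty ι with hι | hι
  · simp
  have hcard : (0 : ℝ) < Fintype.card ι := by exact_mod_cast Fintype.card_pos
  have amgm := Real.geom_mean_le_arith_mean univ (fun _ ↦ 1) p (by simp) (by simpa using hcard)
    (fun i _ ↦ hp i)
  simp only [Real.rpow_one, sum_const, card_univ, nsmul_eq_mul, mul_one, one_mul] at amgm
  have : 1 ≤ (∑ i, p i) / Fintype.card ι :=
    (Real.one_le_rpow h (inv_nonneg.2 hcard.le)).trans amgm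
  rwa [le_div_iff₀ hcard, one_mul] at this

theorem card_le_vnormSq_diagonal_mulVec {ι : Type*} [Fintype ι] [DecidableEq ι] {a v : ι → ℂ}
    (ha : ‖∏ i, a i‖ = 1) (hv : 1 ≤ ∏ i, ‖v i‖ ^ 2) :
    (Fintype.card ι : ℝ) ≤ vnormSq ((diagonal a).mulVec v) := by
  refine card_le_sum_of_one_le_prod (fun _ ↦ by positivity) ?_
  simpa only [mulVec_diagonal, norm_mul, mul_pow, prod_mul_distrib, prod_pow, ← norm_prod, ha,
    one_pow, one_mul] using hv

namespace NumberField

variable {K : Type*} [Field K] [NumberField K]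

theorem one_le_abs_norm_of_ne_zero {x : 𝓞 K} (hx : x ≠ 0) : 1 ≤ |Algebra.norm ℚ (x : K)| := by
  rw [← Algebra.coe_norm_int, ← Int.cast_abs]
  exact_mod_cast Int.one_le_abs (Algebra.norm_ne_zero_iff.mpr hx)

instance [IsTotallyComplex K] : IsEmpty {w : InfinitePlace K // w.IsReal} :=
  ⟨fun w ↦ InfinitePlace.not_isReal_iff_isComplex.mpr (IsTotallyComplex.isComplex w.1) w.2⟩

theorem prod_norm_relCanEmb_sq [IsTotallyComplex K] (x : K) :
    ∏ w, ‖relCanEmb K x w‖ ^ 2 = |Algebra.norm ℚ x| := by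
  rw [← mixedEmbedding.norm_eq_norm, mixedEmbedding.norm_apply]
  simp only [mixedEmbedding.normAtPlace_apply, IsTotallyComplex.mult_eq, relCanEmb,
    InfinitePlace.norm_embedding_eq]
  exact Fintype.prod_equiv (Equiv.subtypeUnivEquiv IsTotallyComplex.isComplex) _ _ fun _ ↦ rfl

theorem isLeast_vnormSq_diagonal_mulVec_relCanEmb [IsTotallyComplex K] :
    IsLeast {r : ℝ | ∃ a : {w : InfinitePlace K // w.IsComplex} → ℂ,
        ‖∏ w, a w‖ = 1 ∧ ∃ x : 𝓞 K, x ≠ 0 ∧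
          r = vnormSq ((Matrix.diagonal a).mulVec (relCanEmb K (x : K)))}
      (InfinitePlace.nrComplexPlaces K) := by
  refine ⟨⟨1, by simp, 1, one_ne_zero, ?_⟩, ?_⟩
  · simp [vnormSq, relCanEmb, InfinitePlace.nrComplexPlaces]
  · rintro r ⟨a, ha, x, hx, rfl⟩
    refine card_le_vnormSq_diagonal_mulVec ha ?_
    rw [prod_norm_relCanEmb_sq]
    exact_mod_cast one_le_abs_norm_of_ne_zero hx

namespace mixedEmbedding

variable (K) [IsTotallyComplex K]

noncomputable def complexPartEquiv :
    mixedSpace K ≃L[ℝ] ({w : InfinitePlace K // w.IsComplex} → ℂ) :=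
  ContinuousLinearEquiv.uniqueProd ℝ _ _

theorem measurePreserving_complexPartEquiv :
    MeasurePreserving (complexPartEquiv K) := by
  have : IsProbabilityMeasure (volume : Measure ({w : InfinitePlace K // w.IsReal} → ℝ)) := by
    rw [volume_pi, Measure.pi_of_empty]
    infer_instance
  exact measurePreserving_snd

theorem complexPartEquiv_mixedEmbedding (x : K) :
    complexPartEquiv K (mixedEmbedding K x) = relCanEmb K x :=
  funext (mixedEmbedding_apply_isComplex K x)

theorem comap_span_relCanEmb_basis {ι : Type*} {b : Module.Basis ι ℤ (𝓞 K)}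
    {B : Module.Basis ι ℝ ({w : InfinitePlace K // w.IsComplex} → ℂ)}
    (hB : ∀ i, B i = relCanEmb K (b i : K)) :
    ZLattice.comap ℝ (Submodule.span ℤ (Set.range B)) (complexPartEquiv K).toLinearMap =
      mixedEmbedding.integerLattice K := by
  have hrange : Set.range B = ((complexPartEquiv K).toLinearMap.restrictScalars ℤ ∘ₗ
      ((mixedEmbedding K).comp (algebraMap (𝓞 K) K)).toIntAlgHom.toLinearMap) '' Set.range b := by
    rw [← Set.range_comp]
    exact congrArg Set.range
      (funext fun i ↦ (hB i).trans (complexPartEquiv_mixedEmbedding K _).symm)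
  rw [hrange, ← Submodule.map_span, b.span_eq, Submodule.map_top, LinearMap.range_comp]
  exact Submodule.comap_map_eq_of_injective
    (f := (complexPartEquiv K).toLinearMap.restrictScalars ℤ) (complexPartEquiv K).injective _

theorem volume_fundamentalDomain_relCanEmb_basis {ι : Type*} [Finite ι]
    {b : Module.Basis ι ℤ (𝓞 K)} {B : Module.Basis ι ℝ ({w : InfinitePlace K // w.IsComplex} → ℂ)}
    (hB : ∀ i, B i = relCanEmb K (b i : K)) :
    (volume (ZSpan.fundamentalDomain B)).toReal =
      2⁻¹ ^ InfinitePlace.nrComplexPlaces K * √|(discr K : ℝ)| := by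
  rw [← measureReal_def, ← ZLattice.covolume_eq_measure_fundamentalDomain _ _
    (ZSpan.isAddFundamentalDomain B volume), ← ZLattice.covolume_comap _ _ _
    (measurePreserving_complexPartEquiv K), comap_span_relCanEmb_basis K hB,
    covolume_integerLattice]

end mixedEmbedding

end NumberField

theorem natCast_div_half_pow_mul_sqrt_rpow (n : ℕ) {D : ℝ} (hD : 0 ≤ D) :
    (n : ℝ) / (2⁻¹ ^ n * √D) ^ ((1 : ℝ) / n) = 2 * n / D ^ ((1 : ℝ) / (2 * n)) := by
  rcases n.eq_zero_or_pos with rfl | hn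
  · simp
  have hn' : (n : ℝ) ≠ 0 := by positivity
  rw [Real.mul_rpow (by positivity) (Real.sqrt_nonneg _), ← Real.rpow_natCast,
    ← Real.rpow_mul (by norm_num), Real.sqrt_eq_rpow, ← Real.rpow_mul hD,
    mul_one_div_cancel hn', Real.rpow_one, show (1 / 2 : ℝ) * (1 / n) = 1 / (2 * n) by ring]
  ring

/-- For a totally complex number field K of degree 2k and the diagonal group
𝒜_k = {diag(a₁,…,a_k) : |∏aᵢ| = 1}, the reduced Hermite invariant of ψ(𝒪_K), i.e.
inf over A ∈ 𝒜_k and nonzero x ∈ 𝒪_K of ‖A ψ(x)‖² divided by Vol(ψ(𝒪_K))^{1/k},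
equals 2k/|d_K|^{1/2k}. -/
theorem reducedHermite_psi_ringOfIntegers (K : Type*) [Field K] [NumberField K] (k : ℕ)
    (hdeg : Module.finrank ℚ K = 2 * k)
    (htc : ∀ w : InfinitePlace K, w.IsComplex)
    (b : Module.Basis (Fin (2 * k)) ℤ (𝓞 K))
    (B : Module.Basis (Fin (2 * k)) ℝ ({w : InfinitePlace K // w.IsComplex} → ℂ))
    (hB : ∀ i, B i = relCanEmb K (b i : K)) :
    sInf {r : ℝ | ∃ a : {w : InfinitePlace K // w.IsComplex} → ℂ,
          ‖∏ w, a w‖ = 1 ∧ ∃ x : 𝓞 K, x ≠ 0 ∧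
            r = vnormSq ((Matrix.diagonal a).mulVec (relCanEmb K (x : K)))} /
        ((volume (ZSpan.fundamentalDomain B)).toReal ^ ((1 : ℝ) / k))
      = 2 * k / |(NumberField.discr K : ℝ)| ^ ((1 : ℝ) / (2 * k)) := by
  have : IsTotallyComplex K := ⟨htc⟩
  have hk : InfinitePlace.nrComplexPlaces K = k := by
    have := IsTotallyComplex.finrank K
    omega
  rw [isLeast_vnormSq_diagonal_mulVec_relCanEmb.csInf_eq,
    mixedEmbedding.volume_fundamentalDomain_relCanEmb_basis K hB, hk]
  exact natCast_div_half_pow_mul_sqrt_rpow k (abs_nonneg _)
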